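/- Let R be an integral domain with fraction field K, and fix an algebraic closure K̄ of K. Let n ≥ 1 and let p ∈ R[X_1,…,X_n]. Then the following are equivalent: (i) for every commutative R-algebra A and every matrix M ∈ SL_n(A), the image of p in A[X_1,…,X_n] is invariant under M; (ii) the image of p under the canonical map R[X_1,…,X_n] → K̄[X_1,…,X_n] is invariant under every matrix M ∈ SL_n(K̄). (This is the paper's Corollary on invariants over an integral domain, in the case of the smooth affine algebraic group G = SL_{n,R} acting linearly on a polynomial ring, which is a free hence flat R-algebra.) -/

import Mathlib

/-!
Over `B = R[xᵢⱼ][1/det]`, scaling one row of the generic matrix by `1/det` gives a matrix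
`N ∈ SL_n(B)` through which every `M ∈ SL_n(A)` factors by a ring map `B → A`, so invariance
under all of `SL_n` over all `R`-algebras is invariance under `N`. Each coefficient of
`N • p - p` lies in `B`, and its image under evaluation at a point `y ∈ GL_n(K̄)` is a
coefficient of `N(y) • p - p` with `N(y) ∈ SL_n(K̄)`. An element `s / detᵏ` of `B` vanishing on
all of `GL_n(K̄)` has `s · det` vanishing on all of `K̄^{n×n}`, hence `s = 0` because `K̄` is
infinite and `R ↪ K̄`.
-/

open MvPolynomial

section LinearSubst

variable {ι A : Type*} [Fintype ι] [CommRing A]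

noncomputable def linearSubst (M : Matrix ι ι A) : MvPolynomial ι A →ₐ[A] MvPolynomial ι A :=
  aeval fun i => ∑ j, C (M i j) * X j

theorem map_linearSubst {B : Type*} [CommRing B] (f : A →+* B) (M : Matrix ι ι A)
    (q : MvPolynomial ι A) :
    map f (linearSubst M q) = linearSubst (M.map f) (map f q) := by
  simp only [linearSubst, aeval_def, algebraMap_eq, map_eval₂, Matrix.map_apply]
  congr 1
  funext i
  simp

end LinearSubst

section

variable (R : Type*) [CommRing R] (ι : Type*) [Fintype ι] [DecidableEq ι]

abbrev GLCoordRing : Type _ := Localization.Away (Matrix.mvPolynomialX ι ι R).det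

namespace GLCoordRing

noncomputable def genericMatrix : Matrix ι ι (GLCoordRing R ι) :=
  (Matrix.mvPolynomialX ι ι R).map (algebraMap _ _)

noncomputable def genericSL (i₀ : ι) : Matrix ι ι (GLCoordRing R ι) :=
  (genericMatrix R ι).updateRow i₀
    (IsLocalization.Away.invSelf (S := GLCoordRing R ι) (Matrix.mvPolynomialX ι ι R).det •
      genericMatrix R ι i₀)

theorem det_genericSL (i₀ : ι) : (genericSL R ι i₀).det = 1 := by
  rw [genericSL, Matrix.det_updateRow_smul, Matrix.updateRow_eq_self, genericMatrix,
    ← RingHom.mapMatrix_apply, ← RingHom.map_det,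
    mul_comm, IsLocalization.Away.mul_invSelf]

variable {ι}

theorem aeval_det_mvPolynomialX {A : Type*} [CommRing A] [Algebra R A] (y : Matrix ι ι A) :
    aeval (fun k : ι × ι => y k.1 k.2) (Matrix.mvPolynomialX ι ι R).det = y.det := by
  rw [AlgHom.map_det, Matrix.mvPolynomialX_mapMatrix_aeval]

noncomputable def lift {A : Type*} [CommRing A] [Algebra R A] (y : Matrix ι ι A)
    (hy : IsUnit y.det) : GLCoordRing R ι →ₐ[R] A :=
  IsLocalization.Away.liftAlgHom (f := aeval fun k : ι × ι => y k.1 k.2) _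
    (by rwa [aeval_det_mvPolynomialX])

theorem lift_algebraMap {A : Type*} [CommRing A] [Algebra R A] (y : Matrix ι ι A)
    (hy : IsUnit y.det) (s : MvPolynomial (ι × ι) R) :
    lift R y hy (algebraMap _ (GLCoordRing R ι) s) = aeval (fun k : ι × ι => y k.1 k.2) s := by
  rw [lift, IsLocalization.Away.coe_liftAlgHom, IsLocalization.Away.lift_eq]
  rfl

theorem exists_algHom_map_genericSL_eq {A : Type*} [CommRing A] [Algebra R A] (i₀ : ι)
    (M : Matrix.SpecialLinearGroup ι A) :
    ∃ f : GLCoordRing R ι →ₐ[R] A, (genericSL R ι i₀).map f = M := by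
  have hM : IsUnit (M : Matrix ι ι A).det := by rw [M.det_coe]; exact isUnit_one
  set e := lift R (M : Matrix ι ι A) hM
  have hgen : (genericMatrix R ι).map e = M := by
    ext i j
    simp [e, genericMatrix, lift_algebraMap]
  have hinv : e (IsLocalization.Away.invSelf (Matrix.mvPolynomialX ι ι R).det) = 1 := by
    have := congrArg e (IsLocalization.Away.mul_invSelf (S := GLCoordRing R ι)
      (Matrix.mvPolynomialX ι ι R).det)
    rwa [map_mul, lift_algebraMap, aeval_det_mvPolynomialX, M.det_coe, one_mul, map_one] at this
  refine ⟨e, ?_⟩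
  rw [genericSL, Matrix.map_updateRow, hgen]
  convert Matrix.updateRow_eq_self (M : Matrix ι ι A) i₀
  ext j
  rw [Function.comp_apply, Pi.smul_apply, smul_eq_mul, map_mul, hinv, one_mul, ← hgen,
    Matrix.map_apply]

variable {R}

theorem eq_zero_of_forall_lift_eq_zero {F : Type*} [Field F] [Infinite F] [Algebra R F]
    (hinj : Function.Injective (algebraMap R F)) (b : GLCoordRing R ι)
    (hb : ∀ (y : Matrix ι ι F) (hy : IsUnit y.det), lift R y hy b = 0) : b = 0 := by
  set d := (Matrix.mvPolynomialX ι ι R).det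
  obtain ⟨k, s, hs⟩ := IsLocalization.Away.surj d b
  suffices s = 0 by
    rw [this, map_zero] at hs
    exact ((IsLocalization.Away.algebraMap_isUnit d).pow k).mul_left_eq_zero.mp hs
  have hd : map (algebraMap R F) d ≠ 0 := by
    rw [RingHom.map_det]
    convert Matrix.det_mvPolynomialX_ne_zero ι F
    ext i j
    simp
  -- `s · d` vanishes off `GL_ι(F)` because of `d`, and on it because `s = b · dᵏ` there.
  have hsd : map (algebraMap R F) s * map (algebraMap R F) d = 0 := by
    refine MvPolynomial.funext fun y => ?_
    set Y : Matrix ι ι F := Matrix.of fun i j => y (i, j)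
    rw [map_mul, map_zero, eval_map, eval_map, ← aeval_def, ← aeval_def,
      show aeval y d = Y.det from aeval_det_mvPolynomialX R Y]
    by_cases hY : Y.det = 0
    · rw [hY, mul_zero]
    · have := congrArg (lift R Y (isUnit_iff_ne_zero.mpr hY)) hs
      rw [map_mul, hb, zero_mul, lift_algebraMap] at this
      rw [show aeval y s = 0 from this.symm, zero_mul]
  exact map_injective _ hinj (by rw [map_zero]; exact (mul_eq_zero.mp hsd).resolve_right hd)

theorem linearSubst_genericSL_map_eq {F : Type*} [Field F] [Infinite F] [Algebra R F]
    (hinj : Function.Injective (algebraMap R F)) (i₀ : ι) (p : MvPolynomial ι R)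
    (h : ∀ M : Matrix.SpecialLinearGroup ι F,
      linearSubst (M : Matrix ι ι F) (map (algebraMap R F) p) = map (algebraMap R F) p) :
    linearSubst (genericSL R ι i₀) (map (algebraMap R (GLCoordRing R ι)) p) =
      map (algebraMap R (GLCoordRing R ι)) p := by
  rw [← sub_eq_zero]
  ext m
  rw [coeff_zero]
  refine eq_zero_of_forall_lift_eq_zero hinj _ fun y hy => ?_
  have hdet : ((genericSL R ι i₀).map (lift R y hy : GLCoordRing R ι →+* F)).det = 1 := by
    rw [← RingHom.mapMatrix_apply, ← RingHom.map_det, det_genericSL, map_one]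
  rw [← AlgHom.coe_toRingHom, ← coeff_map, map_sub, map_linearSubst, map_map,
    AlgHom.comp_algebraMap, h ⟨_, hdet⟩, sub_self, coeff_zero]

theorem linearSubst_map_eq_of_genericSL {A : Type*} [CommRing A] [Algebra R A] (i₀ : ι)
    (p : MvPolynomial ι R)
    (h : linearSubst (genericSL R ι i₀) (map (algebraMap R (GLCoordRing R ι)) p) =
      map (algebraMap R (GLCoordRing R ι)) p)
    (M : Matrix.SpecialLinearGroup ι A) :
    linearSubst (M : Matrix ι ι A) (map (algebraMap R A) p) = map (algebraMap R A) p := by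
  obtain ⟨f, hf⟩ := exists_algHom_map_genericSL_eq R i₀ M
  have := congrArg (map (f : GLCoordRing R ι →+* A)) h
  rwa [map_linearSubst, map_map, AlgHom.coe_toRingHom, hf, AlgHom.comp_algebraMap] at this

end GLCoordRing

end

theorem sl_invariant_iff_invariant_over_algClosure_general
    {R : Type} [CommRing R]
    (K : Type) [Field K] [Algebra R K] [IsFractionRing R K]
    (Kbar : Type) [Field Kbar] [Algebra K Kbar] [IsAlgClosure K Kbar]
    [Algebra R Kbar] [IsScalarTower R K Kbar]
    (n : ℕ) (hn : 1 ≤ n) (p : MvPolynomial (Fin n) R) :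
    (∀ (A : Type) [CommRing A] [Algebra R A],
        ∀ M : Matrix.SpecialLinearGroup (Fin n) A,
          aeval (fun i => ∑ j, C (M.1 i j) * X j) (map (algebraMap R A) p)
            = map (algebraMap R A) p)
    ↔ (∀ M : Matrix.SpecialLinearGroup (Fin n) Kbar,
        aeval (fun i => ∑ j, C (M.1 i j) * X j) (map (algebraMap R Kbar) p)
          = map (algebraMap R Kbar) p) := by
  refine ⟨fun h => h Kbar, fun h A _ _ => ?_⟩
  have : IsAlgClosed Kbar := IsAlgClosure.isAlgClosed K -- provides `Infinite Kbar`
  have hinj : Function.Injective (algebraMap R Kbar) := by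
    rw [IsScalarTower.algebraMap_eq R K Kbar]
    exact (algebraMap K Kbar).injective.comp (IsFractionRing.injective R K)
  exact GLCoordRing.linearSubst_map_eq_of_genericSL ⟨0, hn⟩ p
    (GLCoordRing.linearSubst_genericSL_map_eq hinj _ p h)

/-- For an integral domain `R` with fraction field `K` and algebraic closure `K̄` of `K`,
a polynomial over `R` is invariant under `SL_n(A)` for every commutative `R`-algebra `A`
if and only if its image over `K̄` is invariant under `SL_n(K̄)`. -/
theorem sl_invariant_iff_invariant_over_algClosure
    {R : Type} [CommRing R] [IsDomain R]
    (K : Type) [Field K] [Algebra R K] [IsFractionRing R K]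
    (Kbar : Type) [Field Kbar] [Algebra K Kbar] [IsAlgClosure K Kbar]
    [Algebra R Kbar] [IsScalarTower R K Kbar]
    (n : ℕ) (hn : 1 ≤ n) (p : MvPolynomial (Fin n) R) :
    (∀ (A : Type) [CommRing A] [Algebra R A],
        ∀ M : Matrix.SpecialLinearGroup (Fin n) A,
          aeval (fun i => ∑ j, C (M.1 i j) * X j) (map (algebraMap R A) p)
            = map (algebraMap R A) p)
    ↔ (∀ M : Matrix.SpecialLinearGroup (Fin n) Kbar,
        aeval (fun i => ∑ j, C (M.1 i j) * X j) (map (algebraMap R Kbar) p)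
          = map (algebraMap R Kbar) p) :=
  sl_invariant_iff_invariant_over_algClosure_general K Kbar n hn p
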